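/- arXiv:2112.11768 — 4 statements merged into one kernel-verified Lean document; each statement's English description precedes it below -/
import Mathlib

section
/- Let T ≥ 1, let g : Fin T → ℝ, let α > 0, and let w*_t = exp(−g t / α) / ∑_s exp(−g s / α) be the softmax weights. Equality L(w) = −α · log(∑_t exp(−g t / α)) holds for w in the probability simplex P^T if and only if w = w*, where L(w) = ∑_t w_t · g t + α · ∑_t w_t · log(w_t). -/
/-- The probability simplex over `Fin T`. -/
def probSimplex (T : ℕ) : Set (Fin T → ℝ) :=
  {w | (∀ t, 0 ≤ w t) ∧ ∑ t, w t = 1}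

/-- The entropy-regularized expected-error functional. -/
noncomputable def entropicLoss {T : ℕ} (g : Fin T → ℝ) (α : ℝ) (w : Fin T → ℝ) : ℝ :=
  ∑ t, w t * g t + α * ∑ t, w t * Real.log (w t)

lemma gibbs_term (a b : ℝ) (ha : 0 ≤ a) (hb : 0 < b) :
    0 ≤ a * (Real.log a - Real.log b) - (a - b) ∧
    (a * (Real.log a - Real.log b) - (a - b) = 0 ↔ a = b) := by
  rcases ha.eq_or_lt with h0 | h0
  · constructor
    · simp [← h0]; linarith
    · simp [← h0]
      constructor
      · intro h; linarith
      · intro h; linarith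
  · have hlog : Real.log (b / a) ≤ b / a - 1 := Real.log_le_sub_one_of_pos (by positivity)
    have hlogd : Real.log (b / a) = Real.log b - Real.log a := Real.log_div hb.ne' h0.ne'
    constructor
    · have h1 := mul_le_mul_of_nonneg_left hlog h0.le
      rw [hlogd] at h1
      have hab : a * (b / a) = b := by field_simp
      nlinarith [h1, hab]
    · constructor
      · intro h
        by_contra hne
        have hx : b / a ≠ 1 := by
          intro hh
          apply hne
          field_simp at hh
          linarith
        have hstrict : Real.log (b / a) < b / a - 1 :=
          Real.log_lt_sub_one_of_pos (by positivity) hx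
        have := mul_lt_mul_of_pos_left hstrict h0
        rw [hlogd] at this
        have hab : a * (b / a) = b := by field_simp
        nlinarith
      · intro h; subst h; ring

/-- equality `L(w) = -α log Z` holds on the probability simplex
if and only if `w` is the softmax vector. -/
theorem eos_equality_case
    (T : ℕ) (hT : 1 ≤ T) (g : Fin T → ℝ) (α : ℝ) (hα : 0 < α)
    (wstar : Fin T → ℝ)
    (hwstar : ∀ t, wstar t =
      Real.exp (-(g t) / α) / ∑ s, Real.exp (-(g s) / α)) :
    ∀ w ∈ probSimplex T,
      entropicLoss g α w = -α * Real.log (∑ t, Real.exp (-(g t) / α)) ↔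
        w = wstar := by
  have hne : (Finset.univ : Finset (Fin T)).Nonempty := by
    have : 0 < T := hT
    exact ⟨⟨0, this⟩, Finset.mem_univ _⟩
  set Z := ∑ s, Real.exp (-(g s) / α) with hZ
  have hZpos : 0 < Z := Finset.sum_pos (fun s _ => Real.exp_pos _) hne
  have hws_pos : ∀ t, 0 < wstar t := by
    intro t; rw [hwstar]; positivity
  have hws_sum : ∑ t, wstar t = 1 := by
    simp_rw [hwstar]
    rw [← Finset.sum_div, div_self hZpos.ne']
  have hlog : ∀ t, Real.log (wstar t) = -(g t) / α - Real.log Z := by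
    intro t
    rw [hwstar, Real.log_div (Real.exp_pos _).ne' hZpos.ne', Real.log_exp]
  intro w hw
  obtain ⟨hwpos, hwsum⟩ := hw
  have hDval : ∑ t, (w t * (Real.log (w t) - Real.log (wstar t)) - (w t - wstar t)) =
      ∑ t, w t * Real.log (w t) + (∑ t, w t * g t) / α + Real.log Z := by
    have hterm : ∀ t, w t * (Real.log (w t) - Real.log (wstar t)) - (w t - wstar t) =
        w t * Real.log (w t) + (w t * g t) / α + Real.log Z * w t - w t + wstar t := by
      intro t
      rw [hlog]
      field_simp
      ring
    rw [Finset.sum_congr rfl (fun t _ => hterm t)]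
    simp only [Finset.sum_add_distrib, Finset.sum_sub_distrib, ← Finset.sum_div,
      ← Finset.mul_sum, hwsum, hws_sum]
    ring
  have key : entropicLoss g α w =
      α * (∑ t, (w t * (Real.log (w t) - Real.log (wstar t)) - (w t - wstar t)))
        - α * Real.log Z := by
    rw [hDval]
    unfold entropicLoss
    field_simp
    ring
  constructor
  · intro heq
    rw [key] at heq
    have hD0 : ∑ t, (w t * (Real.log (w t) - Real.log (wstar t)) - (w t - wstar t)) = 0 := by
      have := mul_left_cancel₀ hα.ne' (by linarith : α * (∑ t, (w t * (Real.log (w t) - Real.log (wstar t)) - (w t - wstar t))) = α * 0)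
      simpa using this
    have hall := (Finset.sum_eq_zero_iff_of_nonneg
      (fun t _ => (gibbs_term (w t) (wstar t) (hwpos t) (hws_pos t)).1)).mp hD0
    funext t
    exact (gibbs_term (w t) (wstar t) (hwpos t) (hws_pos t)).2.mp
      (hall t (Finset.mem_univ t))
  · intro h
    subst h
    rw [key]
    have : ∑ t, (w t * (Real.log (w t) - Real.log (w t)) - (w t - w t)) = 0 := by
      simp
    rw [this]
    ring
end

section
/- Let D, T ≥ 1, let x : Fin T → ℝ^D be data points, let μ ∈ ℝ^D, let σ > 0, and set α = 2σ². Then the weights w_t = exp(−‖x_t − μ‖² / (2σ²)) / ∑_s exp(−‖x_s − μ‖² / (2σ²)) (normalized spherically-symmetric Gaussian kernel weights with dimension-wise variance σ²) are the unique minimizer over the probability simplex P^T of L(w) = ∑_t w_t · ‖x_t − μ‖² + α · ∑_t w_t · log(w_t), where ‖·‖ is the Euclidean norm on ℝ^D. -/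
lemma gibbs_key_strict {a b : ℝ} (hb : 0 < b) (ha : 0 ≤ a) (hne : a ≠ b) :
    a - b < a * Real.log a - a * Real.log b := by
  rcases eq_or_lt_of_le ha with h | h
  · rw [← h]; simp; linarith
  · have hba : b / a ≠ 1 := by
      intro e
      exact hne ((div_eq_one_iff_eq h.ne').mp e).symm
    have hlog : Real.log (b / a) < b / a - 1 :=
      Real.log_lt_sub_one_of_pos (by positivity) hba
    rw [Real.log_div hb.ne' h.ne'] at hlog
    have h2 := (mul_lt_mul_iff_right₀ h).mpr hlog
    rw [mul_sub, mul_sub, mul_div_cancel₀ _ h.ne'] at h2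
    linarith

lemma gibbs_key {a b : ℝ} (hb : 0 < b) (ha : 0 ≤ a) :
    a - b ≤ a * Real.log a - a * Real.log b := by
  rcases eq_or_ne a b with h | h
  · rw [h]; simp
  · exact (gibbs_key_strict hb ha h).le

/-- Gibbs variational principle on the finite simplex: the loss of any `v` in
the simplex equals `α · KL(v‖w) − α log Z`. -/
lemma entropicLoss_eq_kl {T : ℕ} (g : Fin T → ℝ) (α : ℝ) (Z : ℝ) (hZpos : 0 < Z)
    (w : Fin T → ℝ) (hgform : ∀ t, g t = -α * Real.log (w t) - α * Real.log Z)
    (v : Fin T → ℝ) (hv1 : ∑ t, v t = 1) :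
    entropicLoss g α v =
      α * (∑ t, (v t * Real.log (v t) - v t * Real.log (w t))) - α * Real.log Z := by
  unfold entropicLoss
  have h1 : ∑ t, v t * g t =
      (∑ t, -(α * (v t * Real.log (w t)))) - α * Real.log Z := by
    calc ∑ t, v t * g t
        = ∑ t, (-(α * (v t * Real.log (w t))) - α * Real.log Z * v t) := by
          apply Finset.sum_congr rfl
          intro t _
          rw [hgform t]; ring
      _ = (∑ t, -(α * (v t * Real.log (w t)))) - α * Real.log Z * ∑ t, v t := by
          rw [Finset.sum_sub_distrib, ← Finset.mul_sum]
      _ = (∑ t, -(α * (v t * Real.log (w t)))) - α * Real.log Z := by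
          rw [hv1, mul_one]
  rw [h1]
  simp only [mul_sub, Finset.sum_neg_distrib, ← Finset.mul_sum, Finset.sum_sub_distrib]
  ring

/-- the normalized spherically-symmetric Gaussian kernel weights
with variance `σ²` are the unique minimizer over the probability simplex of the
squared-Euclidean-error functional with entropy weight `α = 2σ²`. -/
theorem eos_gaussian_kernel_weights_optimal
    (D T : ℕ) (hD : 1 ≤ D) (hT : 1 ≤ T)
    (x : Fin T → EuclideanSpace ℝ (Fin D)) (μ : EuclideanSpace ℝ (Fin D))
    (σ : ℝ) (hσ : 0 < σ) (α : ℝ) (hα : α = 2 * σ ^ 2)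
    (w : Fin T → ℝ)
    (hw : ∀ t, w t = Real.exp (-‖x t - μ‖ ^ 2 / (2 * σ ^ 2)) /
        ∑ s, Real.exp (-‖x s - μ‖ ^ 2 / (2 * σ ^ 2))) :
    w ∈ probSimplex T ∧
    (∀ v ∈ probSimplex T,
      entropicLoss (fun t => ‖x t - μ‖ ^ 2) α w ≤
        entropicLoss (fun t => ‖x t - μ‖ ^ 2) α v) ∧
    (∀ v ∈ probSimplex T,
      (∀ u ∈ probSimplex T,
        entropicLoss (fun t => ‖x t - μ‖ ^ 2) α v ≤
          entropicLoss (fun t => ‖x t - μ‖ ^ 2) α u) → v = w) := by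
  subst hα
  have hαpos : (0:ℝ) < 2 * σ ^ 2 := by positivity
  set g : Fin T → ℝ := fun t => ‖x t - μ‖ ^ 2 with hg
  set Z : ℝ := ∑ s, Real.exp (-g s / (2 * σ ^ 2)) with hZ
  have hne : (Finset.univ : Finset (Fin T)).Nonempty :=
    Finset.univ_nonempty_iff.mpr (Fin.pos_iff_nonempty.mp hT)
  have hZpos : 0 < Z := Finset.sum_pos (fun s _ => Real.exp_pos _) hne
  have hw' : ∀ t, w t = Real.exp (-g t / (2 * σ ^ 2)) / Z := fun t => hw t
  have hwpos : ∀ t, 0 < w t := by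
    intro t; rw [hw' t]; positivity
  have hwsum : ∑ t, w t = 1 := by
    simp only [hw']
    rw [← Finset.sum_div, ← hZ, div_self hZpos.ne']
  have hwmem : w ∈ probSimplex T := ⟨fun t => (hwpos t).le, hwsum⟩
  have hlogw : ∀ t, Real.log (w t) = -g t / (2 * σ ^ 2) - Real.log Z := by
    intro t
    rw [hw' t, Real.log_div (Real.exp_pos _).ne' hZpos.ne', Real.log_exp]
  have hgform : ∀ t, g t =
      -(2 * σ ^ 2) * Real.log (w t) - (2 * σ ^ 2) * Real.log Z := by
    intro t
    rw [hlogw t]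
    field_simp
    ring
  have hloss := fun (v : Fin T → ℝ) (hv1 : ∑ t, v t = 1) =>
    entropicLoss_eq_kl g (2 * σ ^ 2) Z hZpos w hgform v hv1
  have hKL : ∀ v ∈ probSimplex T,
      0 ≤ ∑ t, (v t * Real.log (v t) - v t * Real.log (w t)) := by
    intro v hv
    obtain ⟨hv0, hv1⟩ := hv
    have h : ∑ t, (v t - w t) ≤
        ∑ t, (v t * Real.log (v t) - v t * Real.log (w t)) :=
      Finset.sum_le_sum (fun t _ => gibbs_key (hwpos t) (hv0 t))
    rwa [Finset.sum_sub_distrib, hv1, hwsum, sub_self] at h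
  have hKLstrict : ∀ v ∈ probSimplex T, v ≠ w →
      0 < ∑ t, (v t * Real.log (v t) - v t * Real.log (w t)) := by
    intro v hv hvw
    obtain ⟨hv0, hv1⟩ := hv
    obtain ⟨t0, ht0⟩ : ∃ t, v t ≠ w t := by
      by_contra h
      push_neg at h
      exact hvw (funext h)
    have h : ∑ t, (v t - w t) <
        ∑ t, (v t * Real.log (v t) - v t * Real.log (w t)) := by
      apply Finset.sum_lt_sum (fun t _ => gibbs_key (hwpos t) (hv0 t))
      exact ⟨t0, Finset.mem_univ t0, gibbs_key_strict (hwpos t0) (hv0 t0) ht0⟩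
    rwa [Finset.sum_sub_distrib, hv1, hwsum, sub_self] at h
  have hKLw : ∑ t, (w t * Real.log (w t) - w t * Real.log (w t)) = 0 := by simp
  refine ⟨hwmem, ?_, ?_⟩
  · intro v hv
    rw [hloss w hwsum, hloss v hv.2, hKLw]
    have := hKL v hv
    nlinarith
  · intro v hv hmin
    by_contra hvw
    have h1 := hmin w hwmem
    rw [hloss w hwsum, hloss v hv.2, hKLw] at h1
    have h2 := hKLstrict v hv hvw
    nlinarith
end

section
/- Let T ≥ 1, let Θ be a nonempty set, let g : Θ → Fin T → ℝ, let α > 0, and define L(w, θ) = ∑_t w_t · g θ t + α · ∑_t w_t · log(w_t) for w in the probability simplex P^T. Suppose sequences (w_n) in P^T and (θ_n) in Θ satisfy, for every n: (θ-step) L(w_n, θ_n) ≤ L(w_n, θ) for all θ ∈ Θ, and (w-step) w_{n+1} is the softmax of g θ_n, i.e. (w_{n+1})_t = exp(−g θ_n t / α) / ∑_s exp(−g θ_n s / α). Then the sequence of loss values L_n := L(w_n, θ_n) is monotonically nonincreasing: L_{n+1} ≤ L_n for all n. -/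
/-- The entropy-regularized expected-error functional for parametric errors:
`L(w, θ) = ∑ t, w t * g θ t + α * ∑ t, w t * log (w t)`. -/
noncomputable def entropicLossParam {T : ℕ} {Θ : Type*} (g : Θ → Fin T → ℝ)
    (α : ℝ) (w : Fin T → ℝ) (θ : Θ) : ℝ :=
  ∑ t, w t * g θ t + α * ∑ t, w t * Real.log (w t)

open Finset in
/-- Softmax minimizes `∑ w v + α ∑ w log w` over the simplex. -/
lemma softmax_min {T : ℕ} (hT : 1 ≤ T) (v : Fin T → ℝ) {α : ℝ} (hα : 0 < α)
    (w : Fin T → ℝ) (hw0 : ∀ t, 0 ≤ w t) (hw1 : ∑ t, w t = 1) :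
    (∑ t, (Real.exp (-(v t) / α) / ∑ s, Real.exp (-(v s) / α)) * v t
      + α * ∑ t, (Real.exp (-(v t) / α) / ∑ s, Real.exp (-(v s) / α)) *
          Real.log (Real.exp (-(v t) / α) / ∑ s, Real.exp (-(v s) / α)))
      ≤ ∑ t, w t * v t + α * ∑ t, w t * Real.log (w t) := by
  have hne : (Finset.univ : Finset (Fin T)).Nonempty := by
    have : Nonempty (Fin T) := Fin.pos_iff_nonempty.mp hT
    exact univ_nonempty
  set Z : ℝ := ∑ s, Real.exp (-(v s) / α) with hZ
  have hZpos : 0 < Z := Finset.sum_pos (fun s _ => Real.exp_pos _) hne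
  set p : Fin T → ℝ := fun t => Real.exp (-(v t) / α) / Z with hp
  have hp_pos : ∀ t, 0 < p t := fun t => div_pos (Real.exp_pos _) hZpos
  have hp_sum : ∑ t, p t = 1 := by
    simp only [hp, ← Finset.sum_div]
    field_simp
    rw [hZ]; simp only [neg_div]
  have hlogp : ∀ t, Real.log (p t) = -(v t) / α - Real.log Z := by
    intro t
    simp [hp, Real.log_div (Real.exp_ne_zero _) (ne_of_gt hZpos), Real.log_exp]
  -- value at p is -α log Z
  have hval : ∑ t, p t * v t + α * ∑ t, p t * Real.log (p t) = -α * Real.log Z := by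
    have : ∑ t, p t * Real.log (p t)
        = ∑ t, (-(p t * v t) / α - p t * Real.log Z) := by
      apply Finset.sum_congr rfl
      intro t _
      rw [hlogp t]
      field_simp
    rw [this, Finset.sum_sub_distrib, ← Finset.sum_mul, hp_sum, ← Finset.sum_div]
    have hneg : ∑ i, -(p i * v i) = -∑ i, p i * v i := by simp
    rw [hneg]
    field_simp
    ring
  rw [hval]
  -- lower bound for arbitrary w
  have hterm : ∀ t, w t - p t ≤ w t * (v t / α + Real.log (w t) + Real.log Z) := by
    intro t
    rcases eq_or_lt_of_le (hw0 t) with h0 | h0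
    · simp [← h0]
      exact (hp_pos t).le
    · have hlog : Real.log (p t / w t) ≤ p t / w t - 1 :=
        Real.log_le_sub_one_of_pos (div_pos (hp_pos t) h0)
      have : 1 - p t / w t ≤ Real.log (w t / p t) := by
        rw [Real.log_div (ne_of_gt h0) (ne_of_gt (hp_pos t))]
        rw [Real.log_div (ne_of_gt (hp_pos t)) (ne_of_gt h0)] at hlog
        linarith
      have h2 : w t * (1 - p t / w t) ≤ w t * Real.log (w t / p t) :=
        mul_le_mul_of_nonneg_left this (hw0 t)
      have h3 : w t * (1 - p t / w t) = w t - p t := by field_simp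
      have h4 : Real.log (w t / p t) = v t / α + Real.log (w t) + Real.log Z := by
        rw [Real.log_div (ne_of_gt h0) (ne_of_gt (hp_pos t)), hlogp t]
        ring
      rw [h3, h4] at h2
      linarith [h2]
  have hsum : 0 ≤ ∑ t, w t * (v t / α + Real.log (w t) + Real.log Z) := by
    calc (0:ℝ) = ∑ t, (w t - p t) := by
            rw [Finset.sum_sub_distrib, hw1, hp_sum]; ring
      _ ≤ _ := Finset.sum_le_sum (fun t _ => hterm t)
  have hexpand : ∑ t, w t * (v t / α + Real.log (w t) + Real.log Z)
      = (∑ t, w t * v t) / α + ∑ t, w t * Real.log (w t) + Real.log Z := by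
    have h1 : ∀ t, w t * (v t / α + Real.log (w t) + Real.log Z)
        = w t * v t / α + w t * Real.log (w t) + Real.log Z * w t := by
      intro t; ring
    rw [Finset.sum_congr rfl (fun t _ => h1 t), Finset.sum_add_distrib,
      Finset.sum_add_distrib, ← Finset.sum_div, ← Finset.mul_sum, hw1, mul_one]
  rw [hexpand] at hsum
  have h5 := mul_nonneg hα.le hsum
  have h6 : α * ((∑ t, w t * v t) / α + ∑ t, w t * Real.log (w t) + Real.log Z)
      = ∑ t, w t * v t + α * ∑ t, w t * Real.log (w t) + α * Real.log Z := by
    field_simp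
  rw [h6] at h5
  linarith

/-- the EOS alternating-minimization iteration (exact θ-step,
softmax w-step) produces a monotonically nonincreasing sequence of losses. -/
theorem eos_algorithm_monotone_descent
    (T : ℕ) (hT : 1 ≤ T) (Θ : Type*) [Nonempty Θ]
    (g : Θ → Fin T → ℝ) (α : ℝ) (hα : 0 < α)
    (w : ℕ → Fin T → ℝ) (θ : ℕ → Θ)
    (hw : ∀ n, w n ∈ probSimplex T)
    (hθstep : ∀ n, ∀ θ' : Θ,
      entropicLossParam g α (w n) (θ n) ≤ entropicLossParam g α (w n) θ')
    (hwstep : ∀ n, ∀ t, w (n + 1) t =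
      Real.exp (-(g (θ n) t) / α) / ∑ s, Real.exp (-(g (θ n) s) / α)) :
    ∀ n, entropicLossParam g α (w (n + 1)) (θ (n + 1)) ≤
      entropicLossParam g α (w n) (θ n) := by
  intro n
  obtain ⟨hw0, hw1⟩ := hw n
  have h1 : entropicLossParam g α (w (n + 1)) (θ (n + 1)) ≤
      entropicLossParam g α (w (n + 1)) (θ n) := hθstep (n + 1) (θ n)
  have h2 : entropicLossParam g α (w (n + 1)) (θ n) ≤
      entropicLossParam g α (w n) (θ n) := by
    have hkey := softmax_min hT (g (θ n)) hα (w n) hw0 hw1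
    have heq : entropicLossParam g α (w (n + 1)) (θ n)
        = ∑ t, (Real.exp (-(g (θ n) t) / α) / ∑ s, Real.exp (-(g (θ n) s) / α)) * g (θ n) t
          + α * ∑ t, (Real.exp (-(g (θ n) t) / α) / ∑ s, Real.exp (-(g (θ n) s) / α)) *
              Real.log (Real.exp (-(g (θ n) t) / α) / ∑ s, Real.exp (-(g (θ n) s) / α)) := by
      simp only [entropicLossParam, hwstep n]
    rw [heq]
    exact hkey
  linarith
end

section
/- Let T ≥ 1, let Θ be a nonempty set, let g : Θ → Fin T → ℝ, let α > 0, and define L(w, θ) = ∑_t w_t · g θ t + α · ∑_t w_t · log(w_t) for w in the probability simplex P^T. Suppose in addition that inf_{θ ∈ Θ} min_t g θ t > −∞ (the error values are uniformly bounded below over Θ). If sequences (w_n) ⊆ P^T and (θ_n) ⊆ Θ satisfy the EOS iteration (θ_n minimizes L(w_n, ·) over Θ, and w_{n+1} is the softmax of g θ_n with parameter α), then the sequence L_n := L(w_n, θ_n) converges to a finite limit. -/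
/-- Gibbs' inequality: cross-entropy is at least entropy. -/
lemma gibbs_aux {T : ℕ} (w p : Fin T → ℝ) (hw0 : ∀ t, 0 ≤ w t) (hw1 : ∑ t, w t = 1)
    (hp0 : ∀ t, 0 < p t) (hp1 : ∑ t, p t = 1) :
    ∑ t, w t * Real.log (p t) ≤ ∑ t, w t * Real.log (w t) := by
  have key : ∀ t, w t * Real.log (p t) - w t * Real.log (w t) ≤ p t - w t := by
    intro t
    rcases eq_or_lt_of_le (hw0 t) with h | h
    · simp [← h]; exact (hp0 t).le
    · have hdiv : (0:ℝ) < p t / w t := div_pos (hp0 t) h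
      have := Real.log_le_sub_one_of_pos hdiv
      rw [Real.log_div (hp0 t).ne' h.ne'] at this
      calc w t * Real.log (p t) - w t * Real.log (w t)
          = w t * (Real.log (p t) - Real.log (w t)) := by ring
        _ ≤ w t * (p t / w t - 1) := mul_le_mul_of_nonneg_left this (hw0 t)
        _ = p t - w t := by field_simp
  have hsum := Finset.sum_le_sum (fun t (_ : t ∈ Finset.univ) => key t)
  rw [Finset.sum_sub_distrib] at hsum
  have hsum2 : ∑ t, (p t - w t) = 0 := by rw [Finset.sum_sub_distrib, hw1, hp1]; ring
  linarith

/-- The softmax lower bound for the entropic loss over the simplex. -/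
lemma loss_ge_neg_alpha_logZ {T : ℕ} (hT : 1 ≤ T) {Θ : Type*} (g : Θ → Fin T → ℝ)
    {α : ℝ} (hα : 0 < α) (θ' : Θ) (w : Fin T → ℝ) (hw : w ∈ probSimplex T) :
    -α * Real.log (∑ s, Real.exp (-(g θ' s) / α)) ≤ entropicLossParam g α w θ' := by
  obtain ⟨hw0, hw1⟩ := hw
  set Z := ∑ s, Real.exp (-(g θ' s) / α) with hZdef
  have hne : (Finset.univ : Finset (Fin T)).Nonempty := ⟨⟨0, by omega⟩, Finset.mem_univ _⟩
  have hZ : 0 < Z := Finset.sum_pos (fun s _ => Real.exp_pos _) hne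
  set p : Fin T → ℝ := fun t => Real.exp (-(g θ' t) / α) / Z with hpdef
  have hp0 : ∀ t, 0 < p t := fun t => div_pos (Real.exp_pos _) hZ
  have hp1 : ∑ t, p t = 1 := by
    rw [hpdef]; rw [← Finset.sum_div]; exact div_self hZ.ne'
  have hlogp : ∀ t, Real.log (p t) = -(g θ' t) / α - Real.log Z := fun t => by
    rw [hpdef, Real.log_div (Real.exp_pos _).ne' hZ.ne', Real.log_exp]
  have hgibbs := gibbs_aux w p hw0 hw1 hp0 hp1
  have hcross : ∑ t, w t * Real.log (p t)
      = -(1/α) * ∑ t, w t * g θ' t - Real.log Z := by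
    simp only [hlogp, mul_sub, Finset.sum_sub_distrib, ← Finset.sum_mul, hw1]
    rw [Finset.mul_sum]
    congr 1
    · congr 1; funext t; field_simp
    · ring
  rw [hcross] at hgibbs
  have h := mul_le_mul_of_nonneg_left hgibbs hα.le
  have hid : α * (-(1/α) * (∑ t, w t * g θ' t) - Real.log Z)
      = -(∑ t, w t * g θ' t) - α * Real.log Z := by field_simp
  rw [hid] at h
  unfold entropicLossParam
  linarith

/-- The entropic loss of the softmax equals `-α log Z`. -/
lemma loss_softmax_eq {T : ℕ} (hT : 1 ≤ T) {Θ : Type*} (g : Θ → Fin T → ℝ)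
    {α : ℝ} (hα : 0 < α) (θ' : Θ) :
    entropicLossParam g α (fun t => Real.exp (-(g θ' t) / α) / ∑ s, Real.exp (-(g θ' s) / α)) θ'
      = -α * Real.log (∑ s, Real.exp (-(g θ' s) / α)) := by
  set Z := ∑ s, Real.exp (-(g θ' s) / α) with hZdef
  have hne : (Finset.univ : Finset (Fin T)).Nonempty := ⟨⟨0, by omega⟩, Finset.mem_univ _⟩
  have hZ : 0 < Z := Finset.sum_pos (fun s _ => Real.exp_pos _) hne
  set p : Fin T → ℝ := fun t => Real.exp (-(g θ' t) / α) / Z with hpdef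
  have hp1 : ∑ t, p t = 1 := by
    rw [hpdef]; rw [← Finset.sum_div]; exact div_self hZ.ne'
  have hlogp : ∀ t, Real.log (p t) = -(g θ' t) / α - Real.log Z := fun t => by
    rw [hpdef, Real.log_div (Real.exp_pos _).ne' hZ.ne', Real.log_exp]
  unfold entropicLossParam
  have : ∑ t, p t * Real.log (p t) = -(1/α) * ∑ t, p t * g θ' t - Real.log Z := by
    simp only [hlogp, mul_sub, Finset.sum_sub_distrib, ← Finset.sum_mul, hp1]
    rw [Finset.mul_sum]
    congr 1
    · congr 1; funext t; field_simp
    · ring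
  rw [this]
  have hα' : α ≠ 0 := hα.ne'
  field_simp
  ring

/-- Uniform-bound: the simplex entropy is at least `-log T`. -/
lemma entropy_ge {T : ℕ} (hT : 1 ≤ T) (w : Fin T → ℝ) (hw : w ∈ probSimplex T) :
    -Real.log T ≤ ∑ t, w t * Real.log (w t) := by
  obtain ⟨hw0, hw1⟩ := hw
  have hTpos : (0:ℝ) < T := by exact_mod_cast hT
  have hgibbs := gibbs_aux w (fun _ => 1 / (T:ℝ)) hw0 hw1
    (fun t => by positivity)
    (by simp [Finset.sum_const, Finset.card_univ]; field_simp)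
  calc -Real.log T = ∑ t, w t * Real.log (1 / (T:ℝ)) := by
        rw [← Finset.sum_mul, hw1, one_mul, Real.log_div one_ne_zero hTpos.ne',
          Real.log_one]; ring
    _ ≤ _ := hgibbs

/-- if the error values are uniformly bounded below over `Θ`,
then the loss sequence of the EOS iteration converges to a finite limit. -/
theorem eos_algorithm_loss_converges
    (T : ℕ) (hT : 1 ≤ T) (Θ : Type*) [Nonempty Θ]
    (g : Θ → Fin T → ℝ) (α : ℝ) (hα : 0 < α)
    (C : ℝ) (hbound : ∀ (θ : Θ) (t : Fin T), C ≤ g θ t)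
    (w : ℕ → Fin T → ℝ) (θ : ℕ → Θ)
    (hw : ∀ n, w n ∈ probSimplex T)
    (hθstep : ∀ n, ∀ θ' : Θ,
      entropicLossParam g α (w n) (θ n) ≤ entropicLossParam g α (w n) θ')
    (hwstep : ∀ n, ∀ t, w (n + 1) t =
      Real.exp (-(g (θ n) t) / α) / ∑ s, Real.exp (-(g (θ n) s) / α)) :
    ∃ l : ℝ, Filter.Tendsto (fun n => entropicLossParam g α (w n) (θ n))
      Filter.atTop (nhds l) := by
  set f : ℕ → ℝ := fun n => entropicLossParam g α (w n) (θ n) with hf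
  have hweq : ∀ n, w (n + 1)
      = fun t => Real.exp (-(g (θ n) t) / α) / ∑ s, Real.exp (-(g (θ n) s) / α) :=
    fun n => funext (hwstep n)
  have hanti : Antitone f := by
    apply antitone_nat_of_succ_le
    intro n
    calc f (n + 1) ≤ entropicLossParam g α (w (n + 1)) (θ n) := hθstep (n + 1) (θ n)
      _ = -α * Real.log (∑ s, Real.exp (-(g (θ n) s) / α)) := by
          rw [hweq n]; exact loss_softmax_eq hT g hα (θ n)
      _ ≤ f n := loss_ge_neg_alpha_logZ hT g hα (θ n) (w n) (hw n)
  have hbdd : BddBelow (Set.range f) := by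
    refine ⟨C - α * Real.log T, ?_⟩
    rintro x ⟨n, rfl⟩
    obtain ⟨hw0, hw1⟩ := hw n
    have h1 : C ≤ ∑ t, w n t * g (θ n) t := by
      calc C = ∑ t, w n t * C := by rw [← Finset.sum_mul, hw1, one_mul]
        _ ≤ _ := Finset.sum_le_sum (fun t _ =>
            mul_le_mul_of_nonneg_left (hbound (θ n) t) (hw0 t))
    have h2 := entropy_ge hT (w n) (hw n)
    have h3 := mul_le_mul_of_nonneg_left h2 hα.le
    simp only [hf, entropicLossParam]
    nlinarith
  exact ⟨⨅ n, f n, tendsto_atTop_ciInf hanti hbdd⟩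
end
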